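/- arXiv:1906.04492 — 4 statements merged into one kernel-verified Lean document; each statement's English description precedes it below -/
import Mathlib

section
/- Let (G¹, G⁰, G²) be an isometric cover of an isometric subgraph G of Q_m = Q(X): G¹ and G² are isometric subgraphs of G whose union of vertex sets is V(G), whose union of edge sets is E(G), with nonempty intersection inducing G⁰. If G¹ and G² both shatter the same subset Y of X, then G⁰ also shatters Y. -/
open Finset

/-- The hypercube graph on subsets of `Fin m`. -/
def cubeGraph (m : ℕ) : SimpleGraph (Finset (Fin m)) where
  Adj A B := (symmDiff A B).card = 1
  symm := ⟨fun A B h => by show (symmDiff B A : Finset (Fin m)).card = 1; rwa [symmDiff_comm]⟩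
  loopless := ⟨fun A h => by simp only [symmDiff_self, bot_eq_empty, card_empty] at h; exact absurd h (by norm_num)⟩

/-- `V` is (the vertex set of) a partial cube isometrically embedded in `Q_m`:
the distance in the induced subgraph equals the Hamming distance. -/
def IsPC {m : ℕ} (V : Set (Finset (Fin m))) : Prop :=
  ∀ u v : V, ((cubeGraph m).induce V).dist u v = (symmDiff u.1 v.1).card

def Shatters {m : ℕ} (V : Set (Finset (Fin m))) (Y : Finset (Fin m)) : Prop :=
  ∀ Z ⊆ Y, ∃ B ∈ V, B ∩ Y = Z

def VCdimLE {m : ℕ} (V : Set (Finset (Fin m))) (d : ℕ) : Prop :=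
  ∀ Y : Finset (Fin m), Shatters V Y → Y.card ≤ d

inductive PCStep {m : ℕ} : Set (Finset (Fin m)) → Set (Finset (Fin m)) → Prop
  | contract (i : Fin m) (V : Set (Finset (Fin m))) :
      PCStep V ((fun B => B.erase i) '' V)
  | restrictPos (i : Fin m) (V : Set (Finset (Fin m))) :
      PCStep V {B ∈ V | i ∈ B}
  | restrictNeg (i : Fin m) (V : Set (Finset (Fin m))) :
      PCStep V {B ∈ V | i ∉ B}

/-- Partial-cube minor relation: a sequence of contractions and restrictions. -/
def PCMinor {m : ℕ} : Set (Finset (Fin m)) → Set (Finset (Fin m)) → Prop :=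
  Relation.ReflTransGen PCStep

/-- `W` is (the vertex set of) a `k`-dimensional subcube of `Q_m`. -/
def IsCubeFam {m : ℕ} (k : ℕ) (W : Set (Finset (Fin m))) : Prop :=
  ∃ (Y X : Finset (Fin m)), Disjoint Y X ∧ X.card = k ∧
    W = {B | ∃ Z ⊆ X, B = Y ∪ Z}

/-- `G` has the cube `Q_k` as a pc-minor. -/
def HasQMinor {m : ℕ} (V : Set (Finset (Fin m))) (k : ℕ) : Prop :=
  ∃ W, PCMinor V W ∧ IsCubeFam k W

def hdist {m : ℕ} (A B : Finset (Fin m)) : ℕ := (symmDiff A B).card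

def IsConvexIn {m : ℕ} (V S : Set (Finset (Fin m))) : Prop :=
  S ⊆ V ∧ ∀ u ∈ S, ∀ v ∈ S, ∀ x ∈ V, hdist u x + hdist x v = hdist u v → x ∈ S

def convexHullIn {m : ℕ} (V S : Set (Finset (Fin m))) : Set (Finset (Fin m)) :=
  ⋂₀ {T | S ⊆ T ∧ IsConvexIn V T}

def IsGatedIn {m : ℕ} (V S : Set (Finset (Fin m))) : Prop :=
  S ⊆ V ∧ ∀ x ∈ V, ∃ g ∈ S, ∀ y ∈ S, hdist x g + hdist g y = hdist x y

/-- The standardly embedded full subdivision `SK_n` in `Q_n`: singletons and pairs. -/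
def SKset (n : ℕ) : Set (Finset (Fin n)) := {B | B.card = 1 ∨ B.card = 2}

/-- A standardly embedded copy of `SK_n` in `Q_m` along the injection `ι`. -/
def skCopy {m : ℕ} (n : ℕ) (ι : Fin n → Fin m) : Set (Finset (Fin m)) :=
  (fun B => B.image ι) '' SKset n


/-! Given `B₁ ∈ V1` and `B₂ ∈ V2` with the same trace on `Y`, follow a geodesic of `G` from `B₁`
to `B₂`. Each of its edges lies in `G¹` or in `G²`, so it meets `V1 ∩ V2` in some `x`. Since `x`
lies on a geodesic, `B₁ ∆ x ⊆ B₁ ∆ B₂`, and the latter misses `Y`; so `x` has the trace of `B₁`. -/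

open SimpleGraph
open scoped symmDiff

theorem inf_eq_inf_iff_disjoint_symmDiff {α : Type*} [GeneralizedBooleanAlgebra α] (a b c : α) :
    a ⊓ c = b ⊓ c ↔ Disjoint (a ∆ b) c := by
  rw [disjoint_iff, inf_symmDiff_distrib_right, symmDiff_eq_bot]

theorem Finset.symmDiff_subset_of_card_add_le {α : Type*} [DecidableEq α] {a b c : Finset α}
    (h : #(a ∆ c) + #(c ∆ b) ≤ #(a ∆ b)) : a ∆ c ⊆ a ∆ b := by
  have hsub : a ∆ b ⊆ a ∆ c ∪ c ∆ b := symmDiff_triangle a c b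
  have hunion : a ∆ b = a ∆ c ∪ c ∆ b :=
    eq_of_subset_of_card_le hsub ((card_union_le _ _).trans h)
  exact hunion ▸ subset_union_left

theorem SimpleGraph.Walk.exists_mem_support_inter {W : Type*} {G : SimpleGraph W} {S T : Set W}
    (hST : ∀ a b, G.Adj a b → (a ∈ S ∧ b ∈ S) ∨ (a ∈ T ∧ b ∈ T)) {u v : W} (p : G.Walk u v)
    (hu : u ∈ S) (hv : v ∈ T) : ∃ x ∈ p.support, x ∈ S ∩ T := by
  induction p with
  | nil => exact ⟨_, start_mem_support _, hu, hv⟩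
  | cons hadj q ih =>
    rcases hST _ _ hadj with ⟨-, hw⟩ | ⟨hu', -⟩
    · obtain ⟨x, hx, hxST⟩ := ih hw hv
      exact ⟨x, List.mem_cons_of_mem _ hx, hxST⟩
    · exact ⟨_, start_mem_support _, hu, hu'⟩

theorem hdist_triangle {m : ℕ} (A B C : Finset (Fin m)) : hdist A C ≤ hdist A B + hdist B C :=
  (card_le_card (symmDiff_triangle A B C)).trans (card_union_le _ _)

theorem hdist_le_walk_length {m : ℕ} {V : Set (Finset (Fin m))} {u v : V}
    (p : ((cubeGraph m).induce V).Walk u v) : hdist u.1 v.1 ≤ p.length := by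
  induction p with
  | nil => simp [hdist]
  | @cons a b c hadj q ih =>
    calc hdist a.1 c.1 ≤ hdist a.1 b.1 + hdist b.1 c.1 := hdist_triangle _ _ _
      _ ≤ 1 + q.length := by rw [show hdist a.1 b.1 = 1 from hadj]; omega
      _ = _ := by rw [Walk.length_cons, add_comm]

theorem hdist_add_hdist_le_walk_length {m : ℕ} {V : Set (Finset (Fin m))} {u v x : V}
    (p : ((cubeGraph m).induce V).Walk u v) (hx : x ∈ p.support) :
    hdist u.1 x.1 + hdist x.1 v.1 ≤ p.length := by
  classical
  rw [← p.take_spec hx, Walk.length_append]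
  exact add_le_add (hdist_le_walk_length _) (hdist_le_walk_length _)

theorem IsPC.exists_walk_length_eq_hdist {m : ℕ} {V : Set (Finset (Fin m))} (hV : IsPC V)
    (u v : V) : ∃ p : ((cubeGraph m).induce V).Walk u v, p.length = hdist u.1 v.1 := by
  by_cases huv : u = v
  · subst huv
    exact ⟨.nil, by simp [hdist]⟩
  · have hne : ((cubeGraph m).induce V).dist u v ≠ 0 := by
      rw [hV, Ne, card_eq_zero, ← bot_eq_empty, symmDiff_eq_bot]
      exact fun h => huv (Subtype.ext h)
    obtain ⟨p, hp⟩ := exists_walk_of_dist_ne_zero hne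
    exact ⟨p, hp.trans (hV u v)⟩

theorem stmt3_general (m : ℕ) (V V1 V2 : Set (Finset (Fin m))) (hV : IsPC V)
    (h1 : V1 ⊆ V) (h2 : V2 ⊆ V)
    (hedge : ∀ u ∈ V, ∀ v ∈ V, (cubeGraph m).Adj u v →
      (u ∈ V1 ∧ v ∈ V1) ∨ (u ∈ V2 ∧ v ∈ V2))
    (Y : Finset (Fin m)) (hs1 : Shatters V1 Y) (hs2 : Shatters V2 Y) :
    Shatters (V1 ∩ V2) Y := by
  intro Z hZ
  obtain ⟨B1, hB1, rfl⟩ := hs1 Z hZ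
  obtain ⟨B2, hB2, hB2Y⟩ := hs2 _ hZ
  obtain ⟨p, hp⟩ := hV.exists_walk_length_eq_hdist ⟨B1, h1 hB1⟩ ⟨B2, h2 hB2⟩
  obtain ⟨x, hx, hx1, hx2⟩ := p.exists_mem_support_inter (S := {x : V | x.1 ∈ V1})
    (T := {x : V | x.1 ∈ V2}) (fun a b hab => hedge _ a.2 _ b.2 hab) hB1 hB2
  have hgeod : hdist B1 x.1 + hdist x.1 B2 ≤ hdist B1 B2 :=
    hp ▸ hdist_add_hdist_le_walk_length p hx
  have hB12 : Disjoint (B1 ∆ B2) Y := (inf_eq_inf_iff_disjoint_symmDiff _ _ _).1 hB2Y.symm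
  refine ⟨x, ⟨hx1, hx2⟩, (inf_eq_inf_iff_disjoint_symmDiff _ _ _).2 ?_⟩
  rw [symmDiff_comm]
  exact hB12.mono_left (symmDiff_subset_of_card_add_le hgeod)

/-- If both parts of an isometric cover of an isometric subgraph of `Q_m`
shatter `Y`, then so does their intersection. -/
theorem stmt3 (m : ℕ) (V V1 V2 : Set (Finset (Fin m))) (hV : IsPC V)
    (h1 : V1 ⊆ V) (h2 : V2 ⊆ V) (hi1 : IsPC V1) (hi2 : IsPC V2)
    (hcov : V1 ∪ V2 = V)
    (hedge : ∀ u ∈ V, ∀ v ∈ V, (cubeGraph m).Adj u v →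
      (u ∈ V1 ∧ v ∈ V1) ∨ (u ∈ V2 ∧ v ∈ V2))
    (hne : (V1 ∩ V2).Nonempty)
    (Y : Finset (Fin m)) (hs1 : Shatters V1 Y) (hs2 : Shatters V2 Y) :
    Shatters (V1 ∩ V2) Y :=
  stmt3_general m V V1 V2 hV h1 h2 hedge Y hs1 hs2
end

section
/- For every n ≥ 3, the graph SK*_n obtained from the standardly embedded full subdivision SK_n in Q_n by adding the vertex corresponding to the empty set is an isometric subgraph of Q_n of VC-dimension 2. -/
open Finset

/-!
`SK*_n` is exactly the family of subsets of size at most 2, a lower set of the Boolean lattice.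
In a lower set two distinct vertices `u, v` always have a neighbour of `u` one step closer to `v`:
drop an element of `u \ v`, or, if `u ⊆ v`, add an element of `v \ u` (the result lies below `v`).
So Hamming distances are realised by walks, and the family is isometric. A shattered set lies
below a member of the family, so its size is at most 2, while every pair is itself a member and
hence shattered.
-/

open Finset

section Hamming

variable {α : Type*} [DecidableEq α]

lemma symmDiff_singleton_of_mem {s : Finset α} {x : α} (hx : x ∈ s) :
    symmDiff s {x} = s.erase x := by
  ext a
  by_cases hax : a = x <;> simp [mem_symmDiff, hax, hx]

lemma symmDiff_singleton_of_notMem {s : Finset α} {x : α} (hx : x ∉ s) :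
    symmDiff s {x} = insert x s := by
  ext a
  by_cases hax : a = x <;> simp [mem_symmDiff, hax, hx]

lemma card_symmDiff_toggle_add_one {u v : Finset α} {x : α} (hx : x ∈ symmDiff u v) :
    (symmDiff (symmDiff u {x}) v).card + 1 = (symmDiff u v).card := by
  rw [symmDiff_right_comm, symmDiff_singleton_of_mem hx, card_erase_add_one hx]

lemma IsLowerSet.exists_toggle_mem {V : Set (Finset α)} (hV : IsLowerSet V) {u v : Finset α}
    (hu : u ∈ V) (hv : v ∈ V) (hne : u ≠ v) : ∃ x ∈ symmDiff u v, symmDiff u {x} ∈ V := by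
  rcases (u \ v).eq_empty_or_nonempty with huv | ⟨x, hx⟩
  · have hsub : u ⊂ v := (sdiff_eq_empty_iff_subset.mp huv).ssubset_of_ne hne
    obtain ⟨x, hxv, hxu⟩ := exists_of_ssubset hsub
    refine ⟨x, mem_symmDiff.mpr (Or.inr ⟨hxv, hxu⟩), hV ?_ hv⟩
    rw [symmDiff_singleton_of_notMem hxu]
    exact insert_subset hxv hsub.subset
  · obtain ⟨hxu, hxv⟩ := mem_sdiff.mp hx
    refine ⟨x, mem_symmDiff.mpr (Or.inl ⟨hxu, hxv⟩), hV ?_ hu⟩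
    rw [symmDiff_singleton_of_mem hxu]
    exact erase_subset x u

end Hamming

section PartialCube

variable {m : ℕ} {V : Set (Finset (Fin m))}

lemma card_symmDiff_le_length {u v : V} (p : ((cubeGraph m).induce V).Walk u v) :
    (symmDiff u.1 v.1).card ≤ p.length := by
  induction p with
  | nil => simp
  | @cons a b c hab p ih =>
    have hab : (symmDiff a.1 b.1).card = 1 := hab
    calc (symmDiff a.1 c.1).card
        ≤ (symmDiff a.1 b.1 ∪ symmDiff b.1 c.1).card := card_le_card (symmDiff_triangle _ _ _)
      _ ≤ (symmDiff a.1 b.1).card + (symmDiff b.1 c.1).card := card_union_le _ _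
      _ ≤ (p.cons _).length := by simp only [hab, SimpleGraph.Walk.length_cons]; omega

lemma IsLowerSet.exists_walk_length_eq (hV : IsLowerSet V) (u v : V) :
    ∃ p : ((cubeGraph m).induce V).Walk u v, p.length = (symmDiff u.1 v.1).card := by
  induction hk : (symmDiff u.1 v.1).card generalizing u with
  | zero =>
    obtain rfl : u = v := Subtype.ext (symmDiff_eq_bot.mp (card_eq_zero.mp hk))
    exact ⟨.nil, rfl⟩
  | succ k ih =>
    have hne : u.1 ≠ v.1 := fun h => by simp [h] at hk
    obtain ⟨x, hx, hw⟩ := hV.exists_toggle_mem u.2 v.2 hne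
    have hadj : ((cubeGraph m).induce V).Adj u ⟨_, hw⟩ := by
      change (symmDiff u.1 (symmDiff u.1 {x})).card = 1
      rw [symmDiff_symmDiff_cancel_left, card_singleton]
    obtain ⟨p, hp⟩ := ih ⟨_, hw⟩ (by
      change (symmDiff (symmDiff u.1 {x}) v.1).card = k
      have := card_symmDiff_toggle_add_one hx; omega)
    exact ⟨p.cons hadj, by simp [hp]⟩

theorem IsLowerSet.isPC (hV : IsLowerSet V) : IsPC V := by
  intro u v
  obtain ⟨p, hp⟩ := hV.exists_walk_length_eq u v
  obtain ⟨q, hq⟩ := p.reachable.exists_walk_length_eq_dist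
  exact le_antisymm (hp ▸ SimpleGraph.dist_le p) (hq ▸ card_symmDiff_le_length q)

lemma Shatters.exists_superset {Y : Finset (Fin m)} (h : Shatters V Y) : ∃ B ∈ V, Y ⊆ B := by
  obtain ⟨B, hB, hBY⟩ := h Y Subset.rfl
  exact ⟨B, hB, inter_eq_right.mp hBY⟩

lemma vcdimLE_of_card_le {d : ℕ} (h : ∀ B ∈ V, B.card ≤ d) : VCdimLE V d := fun _ hY =>
  let ⟨B, hB, hYB⟩ := hY.exists_superset
  (card_le_card hYB).trans (h B hB)

lemma IsLowerSet.shatters (hV : IsLowerSet V) {Y : Finset (Fin m)} (hY : Y ∈ V) :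
    Shatters V Y := fun Z hZ => ⟨Z, hV hZ hY, inter_eq_left.mpr hZ⟩

end PartialCube

lemma insert_empty_SKset_eq (n : ℕ) :
    insert (∅ : Finset (Fin n)) (SKset n) = {B | B.card ≤ 2} := by
  ext B
  simp only [Set.mem_insert_iff, SKset, Set.mem_ofPred_eq, ← card_eq_zero]
  omega

/-- For `n ≥ 3`, `SK*_n` (the standard `SK_n` together with `∅`) is an isometric
subgraph of `Q_n` of VC-dimension 2. -/
theorem stmt7 (n : ℕ) (hn : 3 ≤ n) :
    IsPC (insert (∅ : Finset (Fin n)) (SKset n)) ∧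
      VCdimLE (insert (∅ : Finset (Fin n)) (SKset n)) 2 ∧
      ∃ Y : Finset (Fin n), Y.card = 2 ∧
        Shatters (insert (∅ : Finset (Fin n)) (SKset n)) Y := by
  rw [insert_empty_SKset_eq]
  have hlower : IsLowerSet {B : Finset (Fin n) | B.card ≤ 2} :=
    fun _ _ hBA hA => (card_le_card hBA).trans hA
  obtain ⟨Y, -, hY⟩ := exists_subset_card_eq (s := (univ : Finset (Fin n))) (n := 2)
    (by rw [card_univ, Fintype.card_fin]; omega)
  exact ⟨hlower.isPC, vcdimLE_of_card_le fun _ hB => hB, Y, hY, hlower.shatters hY.le⟩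
end

section
/- Let C be an isometric 6-cycle of a partial cube G of VC-dimension at most 2 (G ∈ F(Q_3)). Then the convex hull of C in G is either C itself or is isomorphic to Q_3⁻, the 3-cube with one vertex removed. -/
open Finset

/-!
Label the edges of the 6-cycle by the coordinates they flip. The cycle is induced, so
antipodal vertices are not adjacent; hence any three consecutive labels are distinct, and as
both halves of the cycle flip the same three coordinates, opposite edges carry the same label.
So the cycle is a 3-cube `Q` with two antipodal vertices `x, y` removed. A subcube is convex,
so the hull is `Q ∩ V`, and each of `x, y` that lies in `V` is in the hull, being between two
cycle vertices. Both cannot lie in `V`: then `V` would contain `Q` and shatter its three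
directions.
-/

open scoped symmDiff

section SymmDiff

variable {α : Type*} [DecidableEq α]

lemma card_symmDiff_add_two_mul_card_inter (s t : Finset α) :
    #(s ∆ t) + 2 * #(s ∩ t) = #s + #t := by
  rw [symmDiff_eq_sup_sdiff_inf, sup_eq_union, inf_eq_inter,
    card_sdiff_of_subset inter_subset_union]
  have := card_union_add_card_inter s t
  have := card_le_card (inter_subset_union (s := s) (t := t))
  omega

lemma pairwise_ne_of_card_singleton_symmDiff_ne_one {x y z : α}
    (h : #({x} ∆ {y} ∆ {z} : Finset α) ≠ 1) : x ≠ y ∧ x ≠ z ∧ y ≠ z := by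
  refine ⟨?_, ?_, ?_⟩ <;> rintro rfl <;> apply h
  · rw [symmDiff_self, bot_symmDiff, card_singleton]
  · rw [symmDiff_symmDiff_self', card_singleton]
  · rw [symmDiff_assoc, symmDiff_self, symmDiff_bot, card_singleton]

lemma singleton_symmDiff_singleton_symmDiff_singleton {x y z : α}
    (hxy : x ≠ y) (hxz : x ≠ z) (hyz : y ≠ z) :
    ({x} ∆ {y} ∆ {z} : Finset α) = {x, y, z} := by
  ext i
  simp only [mem_symmDiff, mem_singleton, mem_insert]
  grind

lemma Finset.map_symmDiff {β : Type*} [DecidableEq β] (e : β ↪ α) (s t : Finset β) :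
    (s ∆ t).map e = s.map e ∆ t.map e := by
  simp only [map_eq_image, image_symmDiff _ _ e.injective]

end SymmDiff

section CubeEmbed

variable {α β : Type*} [DecidableEq α]

/-- The subcube of `2^α` through `v` in the directions `e`, parametrised by `2^β`. -/
def cubeEmbed (v : Finset α) (e : β ↪ α) (Z : Finset β) : Finset α := v ∆ Z.map e

lemma cubeEmbed_symmDiff [DecidableEq β] (v : Finset α) (e : β ↪ α) (Z Z' : Finset β) :
    cubeEmbed v e (Z ∆ Z') = cubeEmbed v e Z ∆ Z'.map e := by
  rw [cubeEmbed, cubeEmbed, Finset.map_symmDiff, symmDiff_assoc]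

lemma cubeEmbed_symmDiff_cubeEmbed [DecidableEq β] (v : Finset α) (e : β ↪ α)
    (Z Z' : Finset β) : cubeEmbed v e Z ∆ cubeEmbed v e Z' = (Z ∆ Z').map e := by
  rw [cubeEmbed, cubeEmbed, Finset.map_symmDiff, symmDiff_symmDiff_symmDiff_comm, symmDiff_self,
    bot_symmDiff]

lemma mem_range_cubeEmbed_iff [Fintype β] {v B : Finset α} {e : β ↪ α} :
    B ∈ Set.range (cubeEmbed v e) ↔ v ∆ B ⊆ univ.map e := by
  constructor
  · rintro ⟨Z, rfl⟩
    rw [cubeEmbed, symmDiff_symmDiff_cancel_left]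
    exact map_subset_map.2 (subset_univ Z)
  · intro h
    obtain ⟨Z, -, hZ⟩ := subset_map_iff.1 h
    exact ⟨Z, by rw [cubeEmbed, ← hZ, symmDiff_symmDiff_cancel_left]⟩

end CubeEmbed

namespace SimpleGraph.Embedding

variable {V W : Type*} {G : SimpleGraph V} {G' : SimpleGraph W}

noncomputable def isoInduceImage (f : G ↪g G') (s : Set V) :
    G.induce s ≃g G'.induce (f '' s) where
  __ := Equiv.Set.image f s f.injective
  map_rel_iff' := by simp

end SimpleGraph.Embedding

section Subcube

variable {m n : ℕ}

lemma disjoint_of_hdist_add_hdist_eq {u x w : Finset (Fin m)}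
    (h : hdist u x + hdist x w = hdist u w) : Disjoint (u ∆ x) (x ∆ w) := by
  have key := card_symmDiff_add_two_mul_card_inter (u ∆ x) (x ∆ w)
  rw [symmDiff_assoc, symmDiff_symmDiff_cancel_left] at key
  unfold hdist at h
  rw [disjoint_iff_inter_eq_empty, ← card_eq_zero]
  omega

lemma hdist_cubeEmbed (v : Finset (Fin m)) (e : Fin n ↪ Fin m) (Z Z' : Finset (Fin n)) :
    hdist (cubeEmbed v e Z) (cubeEmbed v e Z') = #(Z ∆ Z') := by
  rw [hdist, cubeEmbed_symmDiff_cubeEmbed, card_map]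

def cubeEmbedding (v : Finset (Fin m)) (e : Fin n ↪ Fin m) : cubeGraph n ↪g cubeGraph m where
  toFun := cubeEmbed v e
  inj' _ _ h := map_injective e (symmDiff_right_injective v h)
  map_rel_iff' {Z Z'} := by
    change #(cubeEmbed v e Z ∆ cubeEmbed v e Z') = 1 ↔ #(Z ∆ Z') = 1
    rw [cubeEmbed_symmDiff_cubeEmbed, card_map]

lemma cubeEmbed_image_ne (v : Finset (Fin m)) (e : Fin n ↪ Fin m) (w : Finset (Fin n)) :
    cubeEmbed v e '' {Z | Z ≠ w} = cubeEmbed (cubeEmbed v e wᶜ) e '' {Z | Z ≠ univ} := by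
  have hshift : cubeEmbed (cubeEmbed v e wᶜ) e = cubeEmbed v e ∘ (wᶜ ∆ ·) := by
    funext Z
    rw [Function.comp_apply, cubeEmbed_symmDiff]
    rfl
  rw [hshift, Set.image_comp]
  congr 1
  have hinv := symmDiff_right_involutive wᶜ
  rw [Set.image_eq_preimage_of_inverse hinv.leftInverse hinv.rightInverse]
  ext Z
  simp only [Set.mem_preimage, Set.mem_ofPred_eq, ne_eq]
  rw [← top_eq_univ, ← symmDiff_compl_self wᶜ, compl_compl, symmDiff_right_inj]

lemma shatters_range_cubeEmbed (v : Finset (Fin m)) (e : Fin n ↪ Fin m) :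
    Shatters (Set.range (cubeEmbed v e)) (univ.map e) := by
  intro Y hY
  refine ⟨v ∆ ((v ∩ univ.map e) ∆ Y), mem_range_cubeEmbed_iff.2 ?_, ?_⟩
  · rw [symmDiff_symmDiff_cancel_left]
    exact symmDiff_subset_union.trans (union_subset inter_subset_right hY)
  · ext i
    have := @hY i
    simp only [mem_inter, mem_symmDiff]
    tauto

lemma range_cubeEmbed_not_subset {d : ℕ} {V : Set (Finset (Fin m))} (hV : VCdimLE V d)
    (hd : d < n) (v : Finset (Fin m)) (e : Fin n ↪ Fin m) :
    ¬ Set.range (cubeEmbed v e) ⊆ V := by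
  intro hsub
  have hcard := hV _ fun Y hY => (shatters_range_cubeEmbed v e Y hY).imp
    fun B hB => ⟨hsub hB.1, hB.2⟩
  rw [card_map, card_univ, Fintype.card_fin] at hcard
  omega

-- A vertex between two vertices of the subcube agrees with both outside its directions.
lemma isConvexIn_inter_range_cubeEmbed (V : Set (Finset (Fin m))) (v : Finset (Fin m))
    (e : Fin n ↪ Fin m) : IsConvexIn V (V ∩ Set.range (cubeEmbed v e)) := by
  refine ⟨Set.inter_subset_left, ?_⟩
  rintro B ⟨-, hB⟩ B' ⟨-, hB'⟩ x hx hbetween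
  refine ⟨hx, mem_range_cubeEmbed_iff.2 fun i hi => ?_⟩
  by_contra hie
  have hBi : i ∉ v ∆ B := fun h => hie (mem_range_cubeEmbed_iff.1 hB h)
  have hB'i : i ∉ v ∆ B' := fun h => hie (mem_range_cubeEmbed_iff.1 hB' h)
  simp only [mem_symmDiff] at hi hBi hB'i
  exact disjoint_left.1 (disjoint_of_hdist_add_hdist_eq hbetween)
    (by rw [mem_symmDiff]; tauto) (by rw [mem_symmDiff]; tauto)

end Subcube

section ConvexHull

variable {m : ℕ} {V C : Set (Finset (Fin m))}

lemma subset_convexHullIn : C ⊆ convexHullIn V C :=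
  fun _ hx => Set.mem_sInter.2 fun _ hT => hT.1 hx

lemma convexHullIn_subset {T : Set (Finset (Fin m))} (hT : IsConvexIn V T) (hCT : C ⊆ T) :
    convexHullIn V C ⊆ T :=
  Set.sInter_subset_of_mem ⟨hCT, hT⟩

lemma mem_convexHullIn_of_hdist_add_hdist_eq {u w x : Finset (Fin m)} (hu : u ∈ C)
    (hw : w ∈ C) (hx : x ∈ V) (h : hdist u x + hdist x w = hdist u w) :
    x ∈ convexHullIn V C :=
  Set.mem_sInter.2 fun _ ⟨hCT, _, hT⟩ => hT u (hCT hu) w (hCT hw) x hx h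

end ConvexHull

section Hexagon

variable {α : Type*} [DecidableEq α] {u : Fin 6 → Finset α} {l : Fin 6 → α}

lemma symmDiff_add_three (hl : ∀ i, u (i + 1) = u i ∆ {l i}) (i : Fin 6) :
    u i ∆ u (i + 3) = {l i} ∆ {l (i + 1)} ∆ {l (i + 2)} := by
  rw [show i + 3 = i + 1 + 1 + 1 by omega, hl, hl, hl, show i + 1 + 1 = i + 2 by omega]
  simp only [symmDiff_assoc, symmDiff_symmDiff_cancel_left]

lemma labels_pairwise_ne (hl : ∀ i, u (i + 1) = u i ∆ {l i})
    (hfar : ∀ i, #(u i ∆ u (i + 3)) ≠ 1) (i : Fin 6) :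
    l i ≠ l (i + 1) ∧ l i ≠ l (i + 2) ∧ l (i + 1) ≠ l (i + 2) :=
  pairwise_ne_of_card_singleton_symmDiff_ne_one (symmDiff_add_three hl i ▸ hfar i)

/-- Both halves `u i → u (i + 3)` of the cycle flip the same three coordinates, each once; as
consecutive labels differ, the label of an edge must reappear on the opposite edge. -/
lemma label_add_three (hl : ∀ i, u (i + 1) = u i ∆ {l i})
    (hfar : ∀ i, #(u i ∆ u (i + 3)) ≠ 1) (i : Fin 6) : l (i + 3) = l i := by
  have hne := labels_pairwise_ne hl hfar
  obtain ⟨h01, h02, h12⟩ := hne i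
  obtain ⟨h34, h35, h45⟩ := hne (i + 3)
  have hi4 : l i ≠ l (i + 4) := by
    have := (hne (i + 4)).2.1
    rwa [show i + 4 + 2 = i by omega, ne_comm] at this
  have hi5 : l i ≠ l (i + 5) := by
    have := (hne (i + 5)).1
    rwa [show i + 5 + 1 = i by omega, ne_comm] at this
  have hsame := symmDiff_add_three hl (i + 3)
  rw [show i + 3 + 3 = i by omega, symmDiff_comm, symmDiff_add_three hl i,
    singleton_symmDiff_singleton_symmDiff_singleton h01 h02 h12,
    singleton_symmDiff_singleton_symmDiff_singleton h34 h35 h45] at hsame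
  have hmem : l i ∈ ({l (i + 3), l (i + 3 + 1), l (i + 3 + 2)} : Finset α) :=
    hsame ▸ mem_insert_self _ _
  rw [show i + 3 + 1 = i + 4 by omega, show i + 3 + 2 = i + 5 by omega] at hmem
  simp only [mem_insert, mem_singleton] at hmem
  rcases hmem with h | h | h
  exacts [h.symm, absurd h hi4, absurd h hi5]

def hexagon : Fin 6 → Finset (Fin 3) := ![∅, {0}, {0, 1}, univ, {1, 2}, {2}]

lemma hexagon_add_one (i : Fin 6) : hexagon (i + 1) = hexagon i ∆ {![0, 1, 2, 0, 1, 2] i} := by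
  revert i; decide

lemma exists_eq_cubeEmbed_hexagon (hadj : ∀ i, #(u i ∆ u (i + 1)) = 1)
    (hfar : ∀ i, #(u i ∆ u (i + 3)) ≠ 1) :
    ∃ e : Fin 3 ↪ α, ∀ i, u i = cubeEmbed (u 0) e (hexagon i) := by
  choose l hl using fun i => card_eq_one.1 (hadj i)
  replace hl : ∀ i, u (i + 1) = u i ∆ {l i} := fun i => by
    rw [← hl, symmDiff_symmDiff_cancel_left]
  obtain ⟨h01, h02, h12⟩ := labels_pairwise_ne hl hfar 0
  let e : Fin 3 ↪ α := ⟨![l 0, l 1, l 2], by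
    intro j k hjk; fin_cases j <;> fin_cases k <;> simp_all [eq_comm]⟩
  have hle : ∀ i, l i = e (![0, 1, 2, 0, 1, 2] i) := by
    intro i
    fin_cases i
    exacts [rfl, rfl, rfl, label_add_three hl hfar 0, label_add_three hl hfar 1,
      label_add_three hl hfar 2]
  refine ⟨e, fun i => ?_⟩
  induction i using Fin.induction with
  | zero => rw [cubeEmbed, show hexagon 0 = ∅ from rfl, map_empty, ← bot_eq_empty, symmDiff_bot]
  | succ i ih =>
    rw [← Fin.coeSucc_eq_succ, hl, ih, hexagon_add_one, cubeEmbed_symmDiff, map_singleton, hle]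

lemma hexagon_cover (Z : Finset (Fin 3)) : Z ∈ Set.range hexagon ∨ Z = {1} ∨ Z = {0, 2} := by
  revert Z; decide

end Hexagon

lemma eq_range_hexagon_or_eq_ne {T : Set (Finset (Fin 3))} (hT : Set.range hexagon ⊆ T)
    (hne : T ≠ Set.univ) : T = Set.range hexagon ∨ ∃ w, T = {Z | Z ≠ w} := by
  by_cases h1 : {1} ∈ T <;> by_cases h2 : {0, 2} ∈ T
  · refine absurd (Set.eq_univ_of_forall fun Z => ?_) hne
    rcases hexagon_cover Z with h | rfl | rfl
    exacts [hT h, h1, h2]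
  · refine Or.inr ⟨{0, 2}, Set.ext fun Z => ⟨fun hZ hZw => h2 (hZw ▸ hZ), fun hZw => ?_⟩⟩
    rcases hexagon_cover Z with h | rfl | rfl
    exacts [hT h, h1, absurd rfl hZw]
  · refine Or.inr ⟨{1}, Set.ext fun Z => ⟨fun hZ hZw => h1 (hZw ▸ hZ), fun hZw => ?_⟩⟩
    rcases hexagon_cover Z with h | rfl | rfl
    exacts [hT h, absurd rfl hZw, h2]
  · refine Or.inl (Set.Subset.antisymm (fun Z hZ => ?_) hT)
    rcases hexagon_cover Z with h | rfl | rfl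
    exacts [h, absurd hZ h1, absurd hZ h2]

/-- The two vertices of the ambient 3-cube missing from the hexagon lie between two of its
vertices, so the hull picks up those of them that lie in `V`. -/
lemma convexHullIn_image_hexagon {m : ℕ} {V : Set (Finset (Fin m))} (v : Finset (Fin m))
    (e : Fin 3 ↪ Fin m) (hV : cubeEmbed v e '' Set.range hexagon ⊆ V) :
    convexHullIn V (cubeEmbed v e '' Set.range hexagon) =
      cubeEmbed v e '' (cubeEmbed v e ⁻¹' V) := by
  apply Set.Subset.antisymm
  · rw [Set.image_preimage_eq_range_inter, Set.inter_comm]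
    exact convexHullIn_subset (isConvexIn_inter_range_cubeEmbed V v e)
      fun x hx => ⟨hV hx, Set.image_subset_range _ _ hx⟩
  · rintro _ ⟨Z, hZ, rfl⟩
    have hmem : ∀ i, cubeEmbed v e (hexagon i) ∈ cubeEmbed v e '' Set.range hexagon :=
      fun i => ⟨_, ⟨i, rfl⟩, rfl⟩
    rcases hexagon_cover Z with ⟨i, rfl⟩ | rfl | rfl
    · exact subset_convexHullIn (hmem i)
    · exact mem_convexHullIn_of_hdist_add_hdist_eq (hmem 2) (hmem 4) hZ
        (by simp only [hdist_cubeEmbed]; decide)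
    · exact mem_convexHullIn_of_hdist_add_hdist_eq (hmem 1) (hmem 5) hZ
        (by simp only [hdist_cubeEmbed]; decide)

theorem stmt9_general (m : ℕ) (V C : Set (Finset (Fin m)))
    (hvc : VCdimLE V 2) (hCV : C ⊆ V)
    (hcyc : Nonempty (((cubeGraph m).induce C) ≃g SimpleGraph.cycleGraph 6)) :
    convexHullIn V C = C ∨
      Nonempty (((cubeGraph m).induce (convexHullIn V C)) ≃g
        ((cubeGraph 3).induce {B : Finset (Fin 3) | B ≠ Finset.univ})) := by
  obtain ⟨φ⟩ := hcyc
  set u : Fin 6 → Finset (Fin m) := Subtype.val ∘ φ.symm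
  have hadj (i j : Fin 6) : #(u i ∆ u j) = 1 ↔ (SimpleGraph.cycleGraph 6).Adj i j :=
    φ.symm.map_adj_iff
  obtain ⟨e, hu⟩ := exists_eq_cubeEmbed_hexagon (u := u)
    (fun i => (hadj _ _).2 (by revert i; decide)) (fun i => mt (hadj _ _).1 (by revert i; decide))
  have hC : C = cubeEmbed (u 0) e '' Set.range hexagon := by
    rw [← Set.range_comp, show cubeEmbed (u 0) e ∘ hexagon = Subtype.val ∘ φ.symm from
      funext fun i => (hu i).symm, Set.range_comp, φ.symm.surjective.range_eq, Set.image_univ,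
      Subtype.range_coe]
  rw [hC] at hCV ⊢
  rw [convexHullIn_image_hexagon _ _ hCV]
  have hne : cubeEmbed (u 0) e ⁻¹' V ≠ Set.univ := fun h =>
    range_cubeEmbed_not_subset hvc (by norm_num) (u 0) e (Set.preimage_eq_univ_iff.1 h)
  rcases eq_range_hexagon_or_eq_ne (Set.image_subset_iff.1 hCV) hne with hT | ⟨w, hT⟩
  · exact Or.inl (by rw [hT])
  · rw [hT, cubeEmbed_image_ne]
    exact Or.inr ⟨(SimpleGraph.Embedding.isoInduceImage (cubeEmbedding _ e) _).symm⟩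

/-- The convex hull of an isometric 6-cycle in a two-dimensional partial cube is
either the cycle itself or `Q_3⁻` (the 3-cube minus a vertex). -/
theorem stmt9 (m : ℕ) (V C : Set (Finset (Fin m))) (hV : IsPC V)
    (hvc : VCdimLE V 2) (hCV : C ⊆ V) (hC : IsPC C)
    (hcyc : Nonempty (((cubeGraph m).induce C) ≃g SimpleGraph.cycleGraph 6)) :
    convexHullIn V C = C ∨
      Nonempty (((cubeGraph m).induce (convexHullIn V C)) ≃g
        ((cubeGraph 3).induce {B : Finset (Fin 3) | B ≠ Finset.univ})) :=
  stmt9_general m V C hvc hCV hcyc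
end

section
/- Let G ∈ F(Q_3) be a two-dimensional partial cube and let H = SK_n with n ≥ 4 be an isometric subgraph of G, standardly embedded. Then either the vertex ∅ belongs to G (so H extends to SK*_n in G), or H is a convex subgraph of G. -/
open Finset

/-! A vertex `x` of `G` on a geodesic between two vertices of `SK_n` lies below their union, so it
is the image of a set `X` of at most four original vertices. If `#X ≥ 3`, `G` shatters (the image
of) any three of them: traces of size one or two are vertices of `SK_n`, the full trace is cut out
by `x`, and the empty trace by a singleton `{i}` with `i` outside the three (here `n ≥ 4` is
needed). Hence `#X ≤ 2`, and `X ≠ ∅` unless `∅ ∈ G`. -/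

open scoped symmDiff

theorem Finset.subset_union_of_card_symmDiff_add_eq {α : Type*} [DecidableEq α]
    {a b x : Finset α} (h : #(a ∆ x) + #(x ∆ b) = #(a ∆ b)) : x ⊆ a ∪ b := by
  have hdisj : Disjoint (a ∆ x) (x ∆ b) := by
    rw [← card_union_eq_card_add_card]
    refine le_antisymm (card_union_le _ _) ?_
    rw [h]
    exact card_le_card (symmDiff_triangle a x b)
  intro t ht
  by_contra hab
  rw [mem_union, not_or] at hab
  exact disjoint_left.mp hdisj (mem_symmDiff.mpr (Or.inr ⟨ht, hab.1⟩))
    (mem_symmDiff.mpr (Or.inl ⟨ht, hab.2⟩))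

section SKCopy

variable {m n : ℕ} {V : Set (Finset (Fin m))} {ι : Fin n → Fin m}

theorem shatters_image_of_skCopy_subset (hι : ι.Injective) (hsub : skCopy n ι ⊆ V)
    {Y : Finset (Fin n)} (hY : #Y ≤ 3) (hYn : #Y < n) {x : Finset (Fin m)} (hx : x ∈ V)
    (hYx : Y.image ι ⊆ x) : Shatters V (Y.image ι) := by
  intro Z hZ
  obtain ⟨Z, hZY, rfl⟩ := subset_image_iff.mp hZ
  by_cases hZ0 : Z = ∅
  · obtain ⟨l, hlY⟩ : ∃ l, l ∉ Y := by
      by_contra! hall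
      simp [eq_univ_iff_forall.mpr hall] at hYn
    refine ⟨{ι l}, hsub ⟨{l}, Or.inl (card_singleton l), by simp⟩, ?_⟩
    rw [hZ0, image_empty, singleton_inter_of_notMem (by rwa [hι.mem_finset_image])]
  by_cases hZY' : Z = Y
  · exact ⟨x, hx, by rw [hZY']; exact inter_eq_right.mpr hYx⟩
  have hlt : #Z < #Y := card_lt_card (ssubset_of_subset_of_ne hZY hZY')
  have hpos : 0 < #Z := card_pos.mpr (nonempty_iff_ne_empty.mpr hZ0)
  exact ⟨Z.image ι, hsub ⟨Z, show #Z = 1 ∨ #Z = 2 by omega, rfl⟩,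
    inter_eq_left.mpr (image_subset_image hZY)⟩

theorem card_le_two_of_image_mem (hι : ι.Injective) (hn : 4 ≤ n) (hvc : VCdimLE V 2)
    (hsub : skCopy n ι ⊆ V) {X : Finset (Fin n)} (hX : X.image ι ∈ V) : #X ≤ 2 := by
  by_contra! hX3
  obtain ⟨Y, hYX, hY3⟩ := exists_subset_card_eq (show 3 ≤ #X by omega)
  have hsh := shatters_image_of_skCopy_subset hι hsub hY3.le (by omega) hX
    (image_subset_image hYX)
  have := hvc _ hsh
  rw [card_image_of_injective _ hι] at this
  omega

end SKCopy

theorem stmt10_general (m n : ℕ) (hn : 4 ≤ n) (V : Set (Finset (Fin m)))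
    (iota : Fin n → Fin m) (hiota : Function.Injective iota)
    (hvc : VCdimLE V 2)
    (hsub : skCopy n iota ⊆ V) :
    (∅ : Finset (Fin m)) ∈ V ∨ IsConvexIn V (skCopy n iota) := by
  refine or_iff_not_imp_left.mpr fun h0 => ⟨hsub, ?_⟩
  rintro _ ⟨u, -, rfl⟩ _ ⟨v, -, rfl⟩ x hxV hgeo
  have hx : x ⊆ (u ∪ v).image iota := by
    rw [image_union]
    exact subset_union_of_card_symmDiff_add_eq hgeo
  obtain ⟨X, -, rfl⟩ := subset_image_iff.mp hx
  have hX2 := card_le_two_of_image_mem hiota hn hvc hsub hxV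
  have hX0 : X ≠ ∅ := by
    rintro rfl
    exact h0 (by simpa using hxV)
  have hX1 : 0 < #X := card_pos.mpr (nonempty_iff_ne_empty.mpr hX0)
  exact ⟨X, show #X = 1 ∨ #X = 2 by omega, rfl⟩

/-- A standardly embedded isometric `SK_n` (`n ≥ 4`) in a two-dimensional
partial cube either extends by the vertex `∅` (to `SK*_n`) or is convex. -/
theorem stmt10 (m n : ℕ) (hn : 4 ≤ n) (V : Set (Finset (Fin m)))
    (iota : Fin n → Fin m) (hiota : Function.Injective iota)
    (hV : IsPC V) (hvc : VCdimLE V 2)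
    (hsub : skCopy n iota ⊆ V) (hW : IsPC (skCopy n iota)) :
    (∅ : Finset (Fin m)) ∈ V ∨ IsConvexIn V (skCopy n iota) :=
  stmt10_general m n hn V iota hiota hvc hsub
end
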